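/- arXiv:gr-qc/9311010 — 3 statements merged into one kernel-verified Lean document; each statement's English description precedes it below -/
import Mathlib

section
/- Let Γ be a group and let H₁, H₂ : Γ → SU(2) be group homomorphisms such that Tr(H₁(γ)) = Tr(H₂(γ)) for every γ ∈ Γ. Then there exists a single element g₀ ∈ SU(2), independent of γ, such that H₂(γ) = g₀⁻¹ · H₁(γ) · g₀ for all γ ∈ Γ. -/
/-- `SU2` is the special unitary group SU(2): the group of 2×2 complex unitary
matrices with determinant 1, realized as a subgroup of the unitary group. -/
def SU2 : Subgroup (Matrix.unitaryGroup (Fin 2) ℂ) where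
  carrier := {A | (A : Matrix (Fin 2) (Fin 2) ℂ).det = 1}
  one_mem' := by simp
  mul_mem' := by
    intro a b ha hb
    simp only [Set.mem_setOf_eq] at *
    show ((a : Matrix (Fin 2) (Fin 2) ℂ) * (b : Matrix (Fin 2) (Fin 2) ℂ)).det = 1
    rw [Matrix.det_mul, ha, hb, one_mul]
  inv_mem' := by
    intro a ha
    simp only [Set.mem_setOf_eq] at *
    show ((a⁻¹ : Matrix.unitaryGroup (Fin 2) ℂ) : Matrix (Fin 2) (Fin 2) ℂ).det = 1
    rw [Matrix.UnitaryGroup.inv_val, Matrix.star_eq_conjTranspose, Matrix.det_conjTranspose, ha,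
      star_one]

/-- The underlying 2×2 complex matrix of an element of SU(2). -/
def SU2.toMatrix (g : SU2) : Matrix (Fin 2) (Fin 2) ℂ := g.val.val

/-- The trace of (the matrix of) an element of SU(2). -/
noncomputable def SU2.trace (g : SU2) : ℂ := Matrix.trace (SU2.toMatrix g)

/-!
If every `H₁ γ` has trace `±2`, then `H₁ γ = ±1 = H₂ γ`. Otherwise some `H₁ a` has eigenvalues
`λ ≠ λ̄`; as `H₂ a` has the same trace, both are conjugate in SU(2) to `diag(λ, λ̄)`, so we may
assume `H₁ a = H₂ a = diag(λ, λ̄)`. Comparing `Tr (H γ)` with `Tr (H (a γ))` shows that `H₁ γ` and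
`H₂ γ` have the same diagonal, hence off-diagonal entries of the same modulus. If every `H₁ γ` is
diagonal we are done. Otherwise pick `b` with `H₁ b` not diagonal and conjugate `H₂` by an element
of the diagonal torus, which fixes `diag(λ, λ̄)` and rotates the phase of the off-diagonal entries,
so that also `H₁ b = H₂ b`. Now `1, H a, H b, H (a b)` span the 2×2 matrices, and the trace
pairing is nondegenerate, so `Tr (M H₁ γ) = Tr (M H₂ γ)` for these four `M` forces `H₁ γ = H₂ γ`.
-/

open Matrix Complex ComplexConjugate

theorem MonoidHom.trace_mul_sub_eq_zero {Γ n R : Type*} [Monoid Γ] [Fintype n] [DecidableEq n]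
    [CommRing R] {ρ₁ ρ₂ : Γ →* Matrix n n R} (htr : ∀ γ, (ρ₁ γ).trace = (ρ₂ γ).trace) {δ : Γ}
    (hδ : ρ₁ δ = ρ₂ δ) (γ : Γ) : (ρ₁ δ * (ρ₁ γ - ρ₂ γ)).trace = 0 := by
  rw [mul_sub, trace_sub, ← map_mul, hδ, ← map_mul, htr, sub_self]

section TraceDuality

variable {R : Type*} [CommRing R] [NoZeroDivisors R]

theorem Matrix.fin_two_diag_eq_zero_of_trace_mul_eq_zero {d : Fin 2 → R} (hd : d 0 ≠ d 1)
    {Z : Matrix (Fin 2) (Fin 2) R} (h₀ : Z.trace = 0) (h₁ : (diagonal d * Z).trace = 0) :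
    Z 0 0 = 0 ∧ Z 1 1 = 0 := by
  simp only [trace_fin_two, diagonal_mul] at h₀ h₁
  have h₁₁ : (d 0 - d 1) * Z 1 1 = 0 := by linear_combination d 0 * h₀ - h₁
  have hZ₁₁ := (mul_eq_zero.mp h₁₁).resolve_left (sub_ne_zero.mpr hd)
  exact ⟨by linear_combination h₀ - hZ₁₁, hZ₁₁⟩

theorem Matrix.fin_two_eq_zero_of_trace_mul_eq_zero {d : Fin 2 → R} (hd : d 0 ≠ d 1)
    {B : Matrix (Fin 2) (Fin 2) R} (hB₀₁ : B 0 1 ≠ 0) (hB₁₀ : B 1 0 ≠ 0)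
    {Z : Matrix (Fin 2) (Fin 2) R} (h₀ : Z.trace = 0) (h₁ : (diagonal d * Z).trace = 0)
    (h₂ : (B * Z).trace = 0) (h₃ : (diagonal d * B * Z).trace = 0) : Z = 0 := by
  obtain ⟨hZ₀₀, hZ₁₁⟩ := fin_two_diag_eq_zero_of_trace_mul_eq_zero hd h₀ h₁
  simp only [trace_fin_two, mul_apply, Fin.sum_univ_two, hZ₀₀, hZ₁₁, mul_zero, zero_add, add_zero,
    diagonal_apply_eq, ne_eq, zero_ne_one, one_ne_zero, not_false_eq_true, diagonal_apply_ne,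
    zero_mul] at h₂ h₃
  have h₁₀ : (d 0 - d 1) * B 0 1 * Z 1 0 = 0 := by linear_combination h₃ - d 1 * h₂
  have hZ₁₀ := (mul_eq_zero.mp h₁₀).resolve_left (mul_ne_zero (sub_ne_zero.mpr hd) hB₀₁)
  have hZ₀₁ : Z 0 1 = 0 := by
    simpa [hZ₁₀, hB₁₀] using h₂
  ext i j
  fin_cases i <;> fin_cases j <;> assumption

namespace MonoidHom

variable {Γ : Type*} [Monoid Γ] {ρ₁ ρ₂ : Γ →* Matrix (Fin 2) (Fin 2) R} {d : Fin 2 → R} {a : Γ}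

theorem fin_two_diag_eq_of_trace_eq (htr : ∀ γ, (ρ₁ γ).trace = (ρ₂ γ).trace) (hd : d 0 ≠ d 1)
    (ha₁ : ρ₁ a = diagonal d) (ha₂ : ρ₂ a = diagonal d) (γ : Γ) :
    ρ₁ γ 0 0 = ρ₂ γ 0 0 ∧ ρ₁ γ 1 1 = ρ₂ γ 1 1 := by
  have h := fin_two_diag_eq_zero_of_trace_mul_eq_zero hd (Z := ρ₁ γ - ρ₂ γ)
    (by rw [trace_sub, htr, sub_self])
    (by rw [← ha₁]; exact trace_mul_sub_eq_zero htr (ha₁.trans ha₂.symm) γ)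
  simpa only [Matrix.sub_apply, sub_eq_zero] using h

theorem fin_two_eq_of_trace_eq (htr : ∀ γ, (ρ₁ γ).trace = (ρ₂ γ).trace) (hd : d 0 ≠ d 1)
    (ha₁ : ρ₁ a = diagonal d) (ha₂ : ρ₂ a = diagonal d) {b : Γ} (hb : ρ₁ b = ρ₂ b)
    (hb₀₁ : ρ₁ b 0 1 ≠ 0) (hb₁₀ : ρ₁ b 1 0 ≠ 0) : ρ₁ = ρ₂ := by
  ext1 γ
  rw [← sub_eq_zero]
  refine fin_two_eq_zero_of_trace_mul_eq_zero hd hb₀₁ hb₁₀ ?_ ?_ ?_ ?_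
  · rw [trace_sub, htr, sub_self]
  · rw [← ha₁]
    exact trace_mul_sub_eq_zero htr (ha₁.trans ha₂.symm) γ
  · exact trace_mul_sub_eq_zero htr hb γ
  · rw [← ha₁, ← map_mul]
    exact trace_mul_sub_eq_zero htr (by rw [map_mul, map_mul, ha₁, ha₂, hb]) γ

end MonoidHom

end TraceDuality

namespace SU2

theorem toMatrix_injective : Function.Injective toMatrix :=
  fun _ _ h => Subtype.ext (Subtype.ext h)

@[simp] theorem toMatrix_one : toMatrix 1 = 1 := rfl

@[simp] theorem toMatrix_mul (g h : SU2) : toMatrix (g * h) = toMatrix g * toMatrix h := rfl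

@[simp] theorem toMatrix_inv (g : SU2) : toMatrix g⁻¹ = star (toMatrix g) := rfl

theorem det_toMatrix (g : SU2) : (toMatrix g).det = 1 := g.2

theorem star_mul_self (g : SU2) : star (toMatrix g) * toMatrix g = 1 := g.1.2.1

theorem mul_star_self (g : SU2) : toMatrix g * star (toMatrix g) = 1 := g.1.2.2

def toMatrixHom : SU2 →* Matrix (Fin 2) (Fin 2) ℂ where
  toFun := toMatrix
  map_one' := toMatrix_one
  map_mul' := toMatrix_mul

@[simp] theorem toMatrixHom_apply (g : SU2) : toMatrixHom g = toMatrix g := rfl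

theorem toMatrix_eq (g : SU2) : toMatrix g =
    !![toMatrix g 0 0, toMatrix g 0 1; -conj (toMatrix g 0 1), conj (toMatrix g 0 0)] := by
  have hadj : star (toMatrix g) = adjugate (toMatrix g) := calc
    _ = star (toMatrix g) * (toMatrix g * adjugate (toMatrix g)) := by
      rw [mul_adjugate, det_toMatrix, one_smul, mul_one]
    _ = adjugate (toMatrix g) := by rw [← mul_assoc, star_mul_self, one_mul]
  have h₀₀ := congrFun₂ hadj 0 0
  have h₀₁ := congrFun₂ hadj 0 1
  simp only [star_apply, adjugate_fin_two, of_apply, cons_val', cons_val_zero, cons_val_one,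
    empty_val', cons_val_fin_one, RCLike.star_def] at h₀₀ h₀₁
  have h₁₀ : toMatrix g 1 0 = -conj (toMatrix g 0 1) := by
    rw [← conj_conj (toMatrix g 1 0), h₀₁, map_neg]
  conv_lhs => rw [eta_fin_two (toMatrix g)]
  rw [← h₀₀, h₁₀]

theorem mul_conj_add_mul_conj (g : SU2) :
    toMatrix g 0 0 * conj (toMatrix g 0 0) + toMatrix g 0 1 * conj (toMatrix g 0 1) = 1 := by
  have h := det_toMatrix g
  rw [toMatrix_eq g, det_fin_two_of] at h
  linear_combination h

theorem normSq_add_normSq (g : SU2) : normSq (toMatrix g 0 0) + normSq (toMatrix g 0 1) = 1 := by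
  have h := mul_conj_add_mul_conj g
  rw [mul_conj, mul_conj] at h
  exact_mod_cast h

theorem ext_of_toMatrix {g h : SU2} (h₀₀ : toMatrix g 0 0 = toMatrix h 0 0)
    (h₀₁ : toMatrix g 0 1 = toMatrix h 0 1) : g = h :=
  toMatrix_injective (by rw [toMatrix_eq g, toMatrix_eq h, h₀₀, h₀₁])

theorem trace_eq_add_conj (g : SU2) : SU2.trace g = toMatrix g 0 0 + conj (toMatrix g 0 0) := by
  rw [SU2.trace, trace_fin_two]
  conv_lhs => rw [toMatrix_eq g]
  simp

theorem trace_eq (g : SU2) : SU2.trace g = 2 * (toMatrix g 0 0).re := by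
  rw [trace_eq_add_conj, add_conj, ofReal_mul, ofReal_ofNat]

theorem re_sq_add_im_sq_add_normSq (g : SU2) :
    (toMatrix g 0 0).re ^ 2 + (toMatrix g 0 0).im ^ 2 + normSq (toMatrix g 0 1) = 1 := by
  rw [← normSq_add_normSq g, normSq_apply (toMatrix g 0 0)]
  ring

theorem toMatrix_eq_of_trace_sq_eq_four {g : SU2} (hg : SU2.trace g ^ 2 = 4) :
    toMatrix g = (SU2.trace g / 2) • 1 := by
  have hre : (toMatrix g 0 0).re ^ 2 = 1 := by
    rw [trace_eq] at hg
    have hg' : ((2 * (toMatrix g 0 0).re) ^ 2 : ℝ) = 4 := by exact_mod_cast hg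
    linarith
  have hsum := re_sq_add_im_sq_add_normSq g
  have him : (toMatrix g 0 0).im = 0 := by nlinarith [normSq_nonneg (toMatrix g 0 1)]
  have h₀₁ : toMatrix g 0 1 = 0 := by
    rw [← normSq_eq_zero]
    nlinarith [normSq_nonneg (toMatrix g 0 1)]
  have h₀₀ : toMatrix g 0 0 = (toMatrix g 0 0).re := by
    conv_lhs => rw [← re_add_im (toMatrix g 0 0), him]
    simp
  rw [trace_eq, toMatrix_eq g, h₀₁, h₀₀, one_fin_two, smul_of]
  ext i j
  fin_cases i <;> fin_cases j <;> simp

theorem eq_of_trace_eq_of_trace_sq_eq_four {g h : SU2} (hgh : SU2.trace g = SU2.trace h)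
    (hg : SU2.trace g ^ 2 = 4) : g = h :=
  toMatrix_injective <| by
    rw [toMatrix_eq_of_trace_sq_eq_four hg, toMatrix_eq_of_trace_sq_eq_four (hgh ▸ hg), hgh]

theorem exists_eigenvalue {g : SU2} (hg : SU2.trace g ^ 2 ≠ 4) :
    ∃ l : ℂ, normSq l = 1 ∧ l + conj l = SU2.trace g ∧ l ≠ conj l := by
  set s := (toMatrix g 0 0).im ^ 2 + normSq (toMatrix g 0 1)
  have hs : 0 ≤ s := add_nonneg (sq_nonneg _) (normSq_nonneg _)
  have hsum : (toMatrix g 0 0).re ^ 2 + s = 1 := by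
    rw [← re_sq_add_im_sq_add_normSq g]
    ring
  refine ⟨⟨(toMatrix g 0 0).re, √s⟩, ?_, ?_, ?_⟩
  · rw [normSq_mk, ← sq, ← sq, Real.sq_sqrt hs, hsum]
  · rw [add_conj, trace_eq]
    norm_cast
  · intro hconj
    have hs₀ : s = 0 := by
      have := conj_eq_iff_im.mp hconj.symm
      simpa [hs] using this
    apply hg
    rw [trace_eq]
    have : ((2 * (toMatrix g 0 0).re) ^ 2 : ℝ) = 4 := by nlinarith
    exact_mod_cast this

def mk (p q : ℂ) (h : normSq p + normSq q = 1) : SU2 :=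
  have hdet : det !![p, q; -conj q, conj p] = 1 := by
    rw [det_fin_two_of, mul_neg, sub_neg_eq_add, mul_conj, mul_conj]
    exact_mod_cast h
  have hstar : star !![p, q; -conj q, conj p] = adjugate !![p, q; -conj q, conj p] := by
    rw [adjugate_fin_two_of]
    ext i j
    fin_cases i <;> fin_cases j <;> simp [star_apply]
  ⟨⟨!![p, q; -conj q, conj p], by rw [mem_unitaryGroup_iff, hstar, mul_adjugate, hdet, one_smul]⟩,
    hdet⟩

@[simp] theorem toMatrix_mk (p q : ℂ) (h : normSq p + normSq q = 1) :
    toMatrix (mk p q h) = !![p, q; -conj q, conj p] := rfl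

def diag (l : ℂ) (h : normSq l = 1) : SU2 := mk l 0 (by simpa using h)

theorem toMatrix_diag (l : ℂ) (h : normSq l = 1) : toMatrix (diag l h) = diagonal ![l, conj l] := by
  rw [diagonal_fin_two]
  simp [diag]

theorem toMatrix_diag_inv_mul_mul_diag_apply (g : SU2) {v : ℂ} (hv : normSq v = 1) (i j : Fin 2) :
    toMatrix ((diag v hv)⁻¹ * g * diag v hv) i j =
      ![conj v, v] i * toMatrix g i j * ![v, conj v] j := by
  rw [toMatrix_mul, toMatrix_mul, toMatrix_inv, toMatrix_diag, star_eq_conjTranspose,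
    diagonal_conjTranspose, mul_diagonal, diagonal_mul]
  fin_cases i <;> simp

/-- `(g₀₁, λ - g₀₀)` is an eigenvector unless it vanishes, in which case `g = diag(λ, λ̄)`. -/
theorem exists_eigenvector_ne_zero (g : SU2) {l : ℂ} (hl : normSq l = 1)
    (htr : l + conj l = SU2.trace g) : ∃ w : Fin 2 → ℂ, w ≠ 0 ∧ toMatrix g *ᵥ w = l • w := by
  have hα := htr.trans (trace_eq_add_conj g)
  have hl' : l * conj l = 1 := by rw [mul_conj, hl, ofReal_one]
  have hnorm := mul_conj_add_mul_conj g
  rw [toMatrix_eq g]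
  by_cases hdiag : toMatrix g 0 1 = 0 ∧ toMatrix g 0 0 = l
  · refine ⟨![1, 0], by simp, ?_⟩
    ext i
    fin_cases i <;> simp [mulVec, dotProduct, Fin.sum_univ_two, hdiag.1, hdiag.2]
  · refine ⟨![toMatrix g 0 1, l - toMatrix g 0 0], ?_, ?_⟩
    · intro h0
      exact hdiag ⟨congrFun h0 0, (sub_eq_zero.mp (congrFun h0 1)).symm⟩
    · ext i
      fin_cases i <;>
        simp only [mulVec, dotProduct, Fin.sum_univ_two, Pi.smul_apply, smul_eq_mul, of_apply,
          cons_val', cons_val_zero, cons_val_one, cons_val_fin_one, Fin.zero_eta, Fin.mk_one]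
      · ring
      · linear_combination -hnorm - l * hα + hl'

theorem exists_unit_eigenvector (g : SU2) {l : ℂ} (hl : normSq l = 1)
    (htr : l + conj l = SU2.trace g) :
    ∃ v : Fin 2 → ℂ, normSq (v 0) + normSq (v 1) = 1 ∧ toMatrix g *ᵥ v = l • v := by
  obtain ⟨w, hw, hgw⟩ := exists_eigenvector_ne_zero g hl htr
  set S := normSq (w 0) + normSq (w 1)
  have hS : 0 < S := by
    have hw' : w 0 ≠ 0 ∨ w 1 ≠ 0 := by
      by_contra! h
      exact hw (funext fun i => by fin_cases i <;> simp [h.1, h.2])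
    rcases hw' with h | h
    · linarith [normSq_pos.mpr h, normSq_nonneg (w 1)]
    · linarith [normSq_pos.mpr h, normSq_nonneg (w 0)]
  refine ⟨((√S)⁻¹ : ℂ) • w, ?_, by rw [mulVec_smul, hgw, smul_comm]⟩
  simp only [Pi.smul_apply, smul_eq_mul, map_mul, map_inv₀, normSq_ofReal]
  rw [← mul_add, Real.mul_self_sqrt hS.le, inv_mul_cancel₀ hS.ne']

theorem exists_inv_mul_mul_eq_diag (g : SU2) {l : ℂ} (hl : normSq l = 1)
    (htr : l + conj l = SU2.trace g) : ∃ x : SU2, x⁻¹ * g * x = diag l hl := by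
  obtain ⟨v, hv, hgv⟩ := exists_unit_eigenvector g hl htr
  have e₀ := congrFun hgv 0
  have e₁ := congrFun hgv 1
  rw [toMatrix_eq g] at e₀ e₁
  simp only [mulVec, dotProduct, Fin.sum_univ_two, Pi.smul_apply, smul_eq_mul, of_apply,
    cons_val', cons_val_zero, cons_val_one, empty_val', cons_val_fin_one] at e₀ e₁
  -- The second column `(-v̄₁, v̄₀)` is a `λ̄`-eigenvector: `g` commutes with the antilinear map
  -- `v ↦ (-v̄₁, v̄₀)`.
  refine ⟨mk (v 0) (-conj (v 1)) (by simpa using hv), ?_⟩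
  rw [mul_assoc, inv_mul_eq_iff_eq_mul]
  apply toMatrix_injective
  rw [toMatrix_mul, toMatrix_mul, toMatrix_mk, toMatrix_diag, diagonal_fin_two]
  conv_lhs => rw [toMatrix_eq g]
  rw [mul_fin_two, mul_fin_two]
  have e₀' := congrArg conj e₀
  have e₁' := congrArg conj e₁
  simp only [map_add, map_mul, map_neg, conj_conj] at e₀' e₁'
  simp only [EmbeddingLike.apply_eq_iff_eq, vecCons_inj, and_true, cons_val_zero, cons_val_one,
    map_neg, conj_conj]
  refine ⟨⟨?_, ?_⟩, ?_, ?_⟩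
  · linear_combination e₀
  · linear_combination -e₁'
  · linear_combination e₁
  · linear_combination e₀'

theorem trace_inv_mul_mul (g x : SU2) : SU2.trace (x⁻¹ * g * x) = SU2.trace g := by
  rw [SU2.trace, SU2.trace, toMatrix_mul, toMatrix_mul, toMatrix_inv, trace_mul_cycle,
    mul_star_self, one_mul]

theorem exists_diag_inv_mul_mul_diag_eq {g h : SU2} (h₀₀ : toMatrix g 0 0 = toMatrix h 0 0)
    (h₀₁ : toMatrix g 0 1 ≠ 0) :
    ∃ (v : ℂ) (hv : normSq v = 1), (diag v hv)⁻¹ * h * diag v hv = g := by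
  have hnorm : normSq (toMatrix g 0 1) = normSq (toMatrix h 0 1) := by
    linarith [normSq_add_normSq g, normSq_add_normSq h, congrArg normSq h₀₀]
  have hh₀₁ : toMatrix h 0 1 ≠ 0 := by
    rw [← normSq_pos, ← hnorm]
    exact normSq_pos.mpr h₀₁
  obtain ⟨w, hw⟩ := IsAlgClosed.exists_pow_nat_eq (toMatrix g 0 1 / toMatrix h 0 1) two_pos
  have hw₁ : normSq w = 1 := by
    rw [← pow_eq_one_iff_of_nonneg (normSq_nonneg w) two_ne_zero, ← map_pow, hw, normSq_div,
      hnorm, div_self (normSq_pos.mpr hh₀₁).ne']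
  have hww : w * conj w = 1 := by rw [mul_conj, hw₁, ofReal_one]
  refine ⟨conj w, by rwa [normSq_conj], ext_of_toMatrix ?_ ?_⟩
  · rw [toMatrix_diag_inv_mul_mul_diag_apply, ← h₀₀]
    simp only [cons_val_zero, conj_conj]
    linear_combination toMatrix g 0 0 * hww
  · rw [toMatrix_diag_inv_mul_mul_diag_apply]
    simp only [cons_val_zero, cons_val_one, conj_conj]
    linear_combination toMatrix h 0 1 * hw + div_mul_cancel₀ (toMatrix g 0 1) hh₀₁

theorem diag_inv_mul_mul_diag (l v : ℂ) (hl : normSq l = 1) (hv : normSq v = 1) :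
    (diag v hv)⁻¹ * diag l hl * diag v hv = diag l hl := by
  have hvv : conj v * v = 1 := by rw [mul_comm, mul_conj, hv, ofReal_one]
  refine ext_of_toMatrix ?_ ?_ <;> rw [toMatrix_diag_inv_mul_mul_diag_apply, toMatrix_diag]
  · simp only [diagonal_apply_eq, cons_val_zero]
    linear_combination l * hvv
  · simp

theorem monoidHom_eq_of_trace_eq {Γ : Type*} [Monoid Γ] {K₁ K₂ : Γ →* SU2}
    (htr : ∀ γ, SU2.trace (K₁ γ) = SU2.trace (K₂ γ)) {l : ℂ} (hl : normSq l = 1) (hne : l ≠ conj l)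
    {a b : Γ} (ha₁ : K₁ a = diag l hl) (ha₂ : K₂ a = diag l hl) (hb : K₁ b = K₂ b)
    (hb₀₁ : toMatrix (K₁ b) 0 1 ≠ 0) : K₁ = K₂ := by
  have hρ := MonoidHom.fin_two_eq_of_trace_eq (ρ₁ := toMatrixHom.comp K₁)
    (ρ₂ := toMatrixHom.comp K₂) (d := ![l, conj l]) (a := a) htr (by simpa using hne)
    (by simp [ha₁, toMatrix_diag]) (by simp [ha₂, toMatrix_diag]) (b := b) (by simp [hb]) hb₀₁
    (by rw [MonoidHom.comp_apply, toMatrixHom_apply, toMatrix_eq]; simpa using hb₀₁)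
  ext1 γ
  exact toMatrix_injective (DFunLike.congr_fun hρ γ)

theorem exists_conj_of_trace_eq_of_eq_diag {Γ : Type*} [Monoid Γ] (K₁ K₂ : Γ →* SU2)
    (htr : ∀ γ, SU2.trace (K₁ γ) = SU2.trace (K₂ γ)) {l : ℂ} (hl : normSq l = 1) (hne : l ≠ conj l)
    {a : Γ} (ha₁ : K₁ a = diag l hl) (ha₂ : K₂ a = diag l hl) :
    ∃ g : SU2, ∀ γ, K₂ γ = g⁻¹ * K₁ γ * g := by
  have h₀₀ (γ : Γ) : toMatrix (K₁ γ) 0 0 = toMatrix (K₂ γ) 0 0 :=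
    (MonoidHom.fin_two_diag_eq_of_trace_eq (ρ₁ := toMatrixHom.comp K₁)
      (ρ₂ := toMatrixHom.comp K₂) (d := ![l, conj l]) (a := a) htr (by simpa using hne)
      (by simp [ha₁, toMatrix_diag]) (by simp [ha₂, toMatrix_diag]) γ).1
  by_cases hdiag : ∀ γ, toMatrix (K₁ γ) 0 1 = 0
  · refine ⟨1, fun γ => ?_⟩
    have h₁ := normSq_add_normSq (K₁ γ)
    have h₂ := normSq_add_normSq (K₂ γ)
    rw [hdiag γ, map_zero, add_zero, h₀₀ γ] at h₁
    have h₂₀₁ : toMatrix (K₂ γ) 0 1 = 0 := normSq_eq_zero.mp (by linarith)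
    rw [inv_one, one_mul, mul_one]
    exact ext_of_toMatrix (h₀₀ γ).symm (by rw [hdiag γ, h₂₀₁])
  push Not at hdiag
  obtain ⟨b, hb⟩ := hdiag
  obtain ⟨v, hv, hvb⟩ := exists_diag_inv_mul_mul_diag_eq (h₀₀ b) hb
  set x := diag v hv
  have hK := monoidHom_eq_of_trace_eq (K₁ := K₁) (K₂ := (MulAut.conj x).symm.toMonoidHom.comp K₂)
    (fun γ => by simp [htr, trace_inv_mul_mul]) hl hne ha₁ (by simp [ha₂, x, diag_inv_mul_mul_diag])
    (b := b) (by simp [hvb]) hb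
  refine ⟨x⁻¹, fun γ => ?_⟩
  have hγ := DFunLike.congr_fun hK γ
  simp only [MonoidHom.comp_apply, MulEquiv.coe_toMonoidHom, MulAut.conj_symm_apply] at hγ
  rw [hγ]
  group

end SU2

/-- Two `SU(2)`-valued homomorphisms of a group with equal traces differ by
conjugation by a single fixed element `g₀` of `SU(2)`. -/
theorem su2_homs_with_equal_traces_are_conjugate
    {Γ : Type*} [Group Γ] (H₁ H₂ : Γ →* SU2)
    (h : ∀ γ : Γ, SU2.trace (H₁ γ) = SU2.trace (H₂ γ)) :
    ∃ g₀ : SU2, ∀ γ : Γ, H₂ γ = g₀⁻¹ * H₁ γ * g₀ := by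
  by_cases hscalar : ∀ γ, SU2.trace (H₁ γ) ^ 2 = 4
  · exact ⟨1, fun γ => by
      simpa using (SU2.eq_of_trace_eq_of_trace_sq_eq_four (h γ) (hscalar γ)).symm⟩
  push Not at hscalar
  obtain ⟨a, ha⟩ := hscalar
  obtain ⟨l, hl, hltr, hne⟩ := SU2.exists_eigenvalue ha
  obtain ⟨x₁, hx₁⟩ := SU2.exists_inv_mul_mul_eq_diag (H₁ a) hl hltr
  obtain ⟨x₂, hx₂⟩ := SU2.exists_inv_mul_mul_eq_diag (H₂ a) hl (hltr.trans (h a))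
  obtain ⟨g, hg⟩ := SU2.exists_conj_of_trace_eq_of_eq_diag
    ((MulAut.conj x₁).symm.toMonoidHom.comp H₁) ((MulAut.conj x₂).symm.toMonoidHom.comp H₂)
    (fun γ => by simp [h, SU2.trace_inv_mul_mul]) hl hne (by simpa using hx₁) (by simpa using hx₂)
  refine ⟨x₁ * g * x₂⁻¹, fun γ => ?_⟩
  have hγ := hg γ
  simp only [MonoidHom.comp_apply, MulEquiv.coe_toMonoidHom, MulAut.conj_symm_apply] at hγ
  calc H₂ γ = x₂ * (x₂⁻¹ * H₂ γ * x₂) * x₂⁻¹ := by group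
    _ = (x₁ * g * x₂⁻¹)⁻¹ * H₁ γ * (x₁ * g * x₂⁻¹) := by rw [hγ]; group
end

section
/- Let N ≥ 1 and let λ₁, …, λ_N be nonzero complex numbers such that for every integer k ∈ ℤ (positive, zero and negative), |λ₁ᵏ + ⋯ + λ_Nᵏ| ≤ N. Then |λᵢ| = 1 for every i = 1, …, N. -/
/-!
Let `q` be the Lagrange basis polynomial that is `1` at `μ = λᵢ` and `0` at the other values
of `λ`. Pairing its coefficients with the power sums `pₖ = ∑ⱼ λⱼᵏ` gives
`∑ₜ qₜ p_{k+t} = ∑ⱼ λⱼᵏ q(λⱼ) = m μᵏ`, with `m ≥ 1` the multiplicity of `μ`. Hence power sums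
bounded for `k ≥ 0` force `|λᵢ| ≤ 1`, and applied to the `λⱼ⁻¹` (negative `k`) they force
`|λᵢ| ≥ 1`.
-/

open Finset Polynomial

lemma le_one_of_forall_pow_le {r C : ℝ} (h : ∀ n : ℕ, r ^ n ≤ C) : r ≤ 1 := by
  by_contra! hr
  obtain ⟨n, hn⟩ := pow_unbounded_of_one_lt C hr
  exact (h n).not_gt hn

lemma sum_pow_mul_eval_eq {ι R : Type*} [Fintype ι] [CommSemiring R] (lam : ι → R) (q : R[X])
    (k : ℕ) :
    ∑ j, lam j ^ k * q.eval (lam j) =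
      ∑ t ∈ range (q.natDegree + 1), q.coeff t * ∑ j, lam j ^ (k + t) := by
  simp only [eval_eq_sum_range, mul_sum, pow_add]
  rw [sum_comm]
  exact sum_congr rfl fun t _ => sum_congr rfl fun j _ => by ring

lemma sum_pow_mul_eval_lagrangeBasis {ι K : Type*} [Fintype ι] [Field K] [DecidableEq K]
    (lam : ι → K) (μ : K) (k : ℕ) :
    ∑ j, lam j ^ k * (Lagrange.basis (univ.image lam) id μ).eval (lam j) =
      #{j | lam j = μ} • μ ^ k := by
  rw [← sum_const, sum_filter]
  refine sum_congr rfl fun j _ => ?_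
  have hj : lam j ∈ univ.image lam := mem_image_of_mem lam (mem_univ j)
  split_ifs with hjμ
  · have : (Lagrange.basis (univ.image lam) id μ).eval (lam j) = 1 := by
      subst hjμ; exact Lagrange.eval_basis_self (v := id) (Set.injOn_id _) hj
    rw [this, mul_one, hjμ]
  · have : (Lagrange.basis (univ.image lam) id μ).eval (lam j) = 0 :=
      Lagrange.eval_basis_of_ne (v := id) (Ne.symm hjμ) hj
    rw [this, mul_zero]

section
variable {ι 𝕜 : Type*} [Fintype ι] [NormedField 𝕜]

lemma exists_bound_sum_pow_mul_eval {lam : ι → 𝕜} {C : ℝ}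
    (hC : ∀ k : ℕ, ‖∑ i, lam i ^ k‖ ≤ C) (q : 𝕜[X]) :
    ∃ D, ∀ k : ℕ, ‖∑ j, lam j ^ k * q.eval (lam j)‖ ≤ D := by
  refine ⟨∑ t ∈ range (q.natDegree + 1), ‖q.coeff t‖ * C, fun k => ?_⟩
  rw [sum_pow_mul_eval_eq]
  refine (norm_sum_le _ _).trans (sum_le_sum fun t _ => ?_)
  rw [norm_mul]
  exact mul_le_mul_of_nonneg_left (hC _) (norm_nonneg _)

lemma norm_le_one_of_forall_norm_sum_pow_le [CharZero 𝕜] {lam : ι → 𝕜} {C : ℝ}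
    (hC : ∀ k : ℕ, ‖∑ i, lam i ^ k‖ ≤ C) (i : ι) : ‖lam i‖ ≤ 1 := by
  classical
  obtain ⟨D, hD⟩ :=
    exists_bound_sum_pow_mul_eval hC (Lagrange.basis (univ.image lam) id (lam i))
  set m := #{j | lam j = lam i}
  have hm : 0 < ‖(m : 𝕜)‖ :=
    norm_pos_iff.2 (Nat.cast_ne_zero.2 (card_pos.2 ⟨i, by simp⟩).ne')
  refine le_one_of_forall_pow_le (C := D / ‖(m : 𝕜)‖) fun k => ?_
  have hk := hD k
  rw [sum_pow_mul_eval_lagrangeBasis, nsmul_eq_mul, norm_mul, norm_pow] at hk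
  rw [le_div_iff₀ hm, mul_comm]
  exact hk

end

theorem eigenvalues_unit_modulus_of_trace_bounds_general (N : ℕ)
    (lam : Fin N → ℂ) (h0 : ∀ i, lam i ≠ 0)
    (hbound : ∀ k : ℤ, ‖∑ i, lam i ^ k‖ ≤ N) :
    ∀ i, ‖lam i‖ = 1 := by
  intro i
  have hle : ‖lam i‖ ≤ 1 :=
    norm_le_one_of_forall_norm_sum_pow_le (fun k => by simpa using hbound k) i
  have hinv : ‖(lam i)⁻¹‖ ≤ 1 :=
    norm_le_one_of_forall_norm_sum_pow_le (lam := fun j => (lam j)⁻¹)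
      (fun k => by simpa [inv_pow, zpow_neg] using hbound (-k)) i
  rw [norm_inv, inv_le_one₀ (norm_pos_iff.2 (h0 i))] at hinv
  exact le_antisymm hle hinv

/-- If `λ₁, …, λ_N` are nonzero complex numbers with `|λ₁ᵏ + ⋯ + λ_Nᵏ| ≤ N` for every
integer `k`, then every `λᵢ` has modulus `1`. -/
theorem eigenvalues_unit_modulus_of_trace_bounds (N : ℕ) (hN : 1 ≤ N)
    (lam : Fin N → ℂ) (h0 : ∀ i, lam i ≠ 0)
    (hbound : ∀ k : ℤ, ‖∑ i, lam i ^ k‖ ≤ N) :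
    ∀ i, ‖lam i‖ = 1 :=
  eigenvalues_unit_modulus_of_trace_bounds_general N lam h0 hbound
end

section
/- Let n, N be natural numbers, μ the normalized Haar probability measure on SU(2), and μⁿ the product measure on SU(2)ⁿ. Let i : Fin N → Fin n assign an index to each letter and let ε : Fin N → {+1, −1} assign an exponent. Suppose there exists j ∈ Fin n such that the number of k ∈ Fin N with i(k) = j is odd. Then ∫_{SU(2)ⁿ} Tr( g_{i(0)}^{ε(0)} · g_{i(1)}^{ε(1)} ⋯ g_{i(N−1)}^{ε(N−1)} ) dμⁿ(g₁, …, gₙ) = 0. -/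
noncomputable instance : MeasurableSpace SU2 := borel SU2
instance : BorelSpace SU2 := ⟨rfl⟩

instance : ContinuousMul SU2 :=
  Topology.IsInducing.continuousMul SU2.subtype Topology.IsInducing.subtypeVal

/-- The central element `-1` of SU(2). -/
noncomputable def SU2.negOne : SU2 :=
  ⟨⟨(-1 : Matrix (Fin 2) (Fin 2) ℂ), by constructor <;> simp⟩, by
    show ((-1 : Matrix (Fin 2) (Fin 2) ℂ)).det = 1
    simp [Matrix.det_neg]⟩

lemma SU2.negOne_mul_self : SU2.negOne * SU2.negOne = 1 := by
  apply Subtype.ext; apply Subtype.ext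
  show ((-1 : Matrix (Fin 2) (Fin 2) ℂ)) * (-1) = 1
  simp

lemma SU2.negOne_comm (g : SU2) : SU2.negOne * g = g * SU2.negOne := by
  apply Subtype.ext; apply Subtype.ext
  show (-1 : Matrix (Fin 2) (Fin 2) ℂ) * SU2.toMatrix g = SU2.toMatrix g * (-1)
  simp

lemma SU2.toMatrix_mul_s10 (a b : SU2) :
    SU2.toMatrix (a * b) = SU2.toMatrix a * SU2.toMatrix b := rfl

lemma SU2.trace_negOne_mul (w : SU2) : SU2.trace (SU2.negOne * w) = -SU2.trace w := by
  unfold SU2.trace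
  rw [SU2.toMatrix_mul_s10]
  show Matrix.trace ((-1 : Matrix (Fin 2) (Fin 2) ℂ) * SU2.toMatrix w) = _
  rw [neg_one_mul, Matrix.trace_neg]

/-- Pulling a central element out of a word. -/
lemma central_ofFn_prod {M : Type*} [Monoid M] (c : M) (hc : ∀ x, c * x = x * c) :
    ∀ (N : ℕ) (P : Fin N → Prop) [DecidablePred P] (w : Fin N → M),
      (List.ofFn fun k => (if P k then c else 1) * w k).prod
        = c ^ (Finset.univ.filter P).card * (List.ofFn w).prod := by
  intro N
  induction N with
  | zero => intro P _ w; simp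
  | succ m ih =>
    intro P _ w
    have hcm : ∀ (t : ℕ) (x : M), c ^ t * x = x * c ^ t := by
      intro t
      induction t with
      | zero => simp
      | succ s ihs =>
        intro x
        rw [pow_succ, mul_assoc, hc, ← mul_assoc, ihs, mul_assoc]
    rw [List.ofFn_succ, List.ofFn_succ, List.prod_cons, List.prod_cons,
      ih (fun k => P k.succ) (fun k => w k.succ)]
    rw [Finset.card_filter, Finset.card_filter, Fin.sum_univ_succ, pow_add]
    by_cases h0 : P 0
    · simp only [h0, if_true]
      rw [pow_one, mul_assoc c, ← mul_assoc (w 0), ← hcm, mul_assoc, mul_assoc]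
    · simp only [h0, if_false]
      rw [pow_zero, one_mul, one_mul, ← mul_assoc (w 0), ← hcm, mul_assoc]

set_option maxHeartbeats 800000 in
open MeasureTheory in
/-- With respect to the product of the normalized Haar probability measure on `SU(2)ⁿ`,
the integral of the trace of a word `g_{i 0}^{ε 0} ⋯ g_{i (N-1)}^{ε (N-1)}` vanishes
whenever some index `j` occurs an odd number of times among the letters. -/
theorem integral_trace_of_word_eq_zero (n N : ℕ)
    (μ : Measure SU2) [μ.IsHaarMeasure] [IsProbabilityMeasure μ]
    (i : Fin N → Fin n) (ε : Fin N → ℤ) (hε : ∀ k, ε k = 1 ∨ ε k = -1)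
    (j : Fin n) (hodd : Odd (Finset.univ.filter fun k => i k = j).card) :
    ∫ g : Fin n → SU2,
        SU2.trace ((List.ofFn fun k : Fin N => (g (i k)) ^ (ε k)).prod)
        ∂(Measure.pi fun _ : Fin n => μ) = 0 := by
  classical
  set c := SU2.negOne with hc
  set π := Measure.pi fun _ : Fin n => μ with hπ
  -- the measurable equivalence multiplying coordinate j by c
  let e : (Fin n → SU2) ≃ᵐ (Fin n → SU2) :=
    MeasurableEquiv.piCongrRight fun k =>
      if k = j then MeasurableEquiv.mulLeft c else MeasurableEquiv.refl SU2
  have he : ∀ (g : Fin n → SU2) (k : Fin n), e g k = if k = j then c * g k else g k := by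
    intro g k
    show (if k = j then MeasurableEquiv.mulLeft c else MeasurableEquiv.refl SU2) (g k) = _
    split_ifs <;> rfl
  have hmp : MeasurePreserving e π π := by
    have := measurePreserving_pi (fun _ : Fin n => μ) (fun _ : Fin n => μ)
      (f := fun k => if k = j then (c * ·) else id)
      (fun k => by
        split_ifs
        · exact measurePreserving_mul_left μ c
        · exact MeasurePreserving.id μ)
    have heq : ⇑e = fun a k => (if k = j then (c * ·) else id) (a k) := by
      funext g k
      rw [he]
      split_ifs with h <;> simp [h]
    rw [heq]
    exact this
  set F : (Fin n → SU2) → ℂ :=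
    fun g => SU2.trace ((List.ofFn fun k : Fin N => (g (i k)) ^ (ε k)).prod) with hF
  have key : ∀ g : Fin n → SU2, F (e g) = - F g := by
    intro g
    have hletter : ∀ k : Fin N,
        (e g (i k)) ^ (ε k) = (if i k = j then c else 1) * (g (i k)) ^ (ε k) := by
      intro k
      rw [he]
      rcases hε k with h | h
      · rw [h, zpow_one, zpow_one]
        split_ifs <;> simp
      · rw [h]
        have : ∀ x : SU2, x ^ (-1 : ℤ) = x⁻¹ := fun x => zpow_neg_one x
        rw [this, this]
        split_ifs with hk
        · rw [mul_inv_rev]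
          have hcinv : c⁻¹ = c := by
            rw [← mul_one c⁻¹, ← SU2.negOne_mul_self, ← hc, ← mul_assoc, inv_mul_cancel, one_mul]
          rw [hcinv, ← SU2.negOne_comm]
        · rw [one_mul]
    have hprod : (List.ofFn fun k : Fin N => (e g (i k)) ^ (ε k)).prod
        = c ^ (Finset.univ.filter fun k => i k = j).card
          * (List.ofFn fun k : Fin N => (g (i k)) ^ (ε k)).prod := by
      have := central_ofFn_prod c SU2.negOne_comm N (fun k => i k = j)
        (fun k => (g (i k)) ^ (ε k))
      rw [show (fun k : Fin N => e g (i k) ^ ε k)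
          = fun k => (if i k = j then c else 1) * g (i k) ^ ε k from funext hletter]
      exact this
    have hcpow : c ^ (Finset.univ.filter fun k => i k = j).card = c := by
      obtain ⟨t, ht⟩ := hodd
      rw [ht, pow_add, pow_mul, pow_two, SU2.negOne_mul_self, one_pow, one_mul, pow_one]
    rw [hF]
    dsimp only
    rw [hprod, hcpow, SU2.trace_negOne_mul]
  have hint : ∫ g, F g ∂π = ∫ g, F (e g) ∂π := (hmp.integral_comp' F).symm
  rw [show (∫ g, F (e g) ∂π) = ∫ g, - F g ∂π from by simp only [key],
    integral_neg] at hint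
  show ∫ g, F g ∂π = 0
  linear_combination hint / 2
end
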